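/- For fixed ρ > 0, if (m,U) ∈ ℝⁿ×S₀ⁿˣⁿ, then r = √(2ρ·e(ρ,m,U)) is the smallest r ≥ 0 such that (m,U) lies in the convex hull of K_{ρ,r}. -/

import Mathlib

/-!
Let `S_r = {(x, x xᵀ) : |x| = r}`. The affine map `(x, M) ↦ (x, ρ⁻¹ M - r²/(nρ) I)` carries `S_r`
onto `K_{ρ,r}`, so everything reduces to describing the convex hull of `S_r`: it is the set of
`(m, M)` with `M - m mᵀ` positive semidefinite and `tr M = r²`. That set is convex, because the
defect `M - m mᵀ` of a convex combination of two points is the combination of their defects plus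
`a b (x - y)(x - y)ᵀ`. Conversely, write `M - m mᵀ = ∑ g gᵀ` and `s = r² - |m|²`; then `(m, M)` is
an average of the points `(m, m mᵀ + (s/|g|²) g gᵀ)`, and each of these lies on the chord of `S_r`
through `m` in direction `g`. For symmetric traceless `U` the semidefiniteness condition on
`(m, ρU + (r²/n) I)` says exactly `λ_max(m mᵀ/ρ - U) ≤ r²/(nρ)`, i.e. `e(ρ,m,U) ≤ r²/(2ρ)`.
-/

open Matrix

/-- Rayleigh-quotient characterization of the largest eigenvalue of a symmetric matrix. -/
noncomputable def lamMax {n : ℕ} (A : Matrix (Fin n) (Fin n) ℝ) : ℝ :=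
  sSup {r : ℝ | ∃ v : Fin n → ℝ, v ⬝ᵥ v = 1 ∧ r = v ⬝ᵥ A.mulVec v}

/-- Smallest eigenvalue via the Rayleigh quotient. -/
noncomputable def lamMin {n : ℕ} (A : Matrix (Fin n) (Fin n) ℝ) : ℝ :=
  sInf {r : ℝ | ∃ v : Fin n → ℝ, v ⬝ᵥ v = 1 ∧ r = v ⬝ᵥ A.mulVec v}

/-- Operator (spectral) norm of a symmetric matrix: max of |Rayleigh quotient|. -/
noncomputable def opNorm {n : ℕ} (A : Matrix (Fin n) (Fin n) ℝ) : ℝ :=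
  sSup {r : ℝ | ∃ v : Fin n → ℝ, v ⬝ᵥ v = 1 ∧ r = |v ⬝ᵥ A.mulVec v|}

/-- The function e(ρ,m,U) = (n/2)·λ_max(m⊗m/ρ − U). -/
noncomputable def ee (n : ℕ) (ρ : ℝ) (m : Fin n → ℝ) (U : Matrix (Fin n) (Fin n) ℝ) : ℝ :=
  ((n : ℝ) / 2) * lamMax (ρ⁻¹ • Matrix.vecMulVec m m - U)

/-- The constraint set K_{ρ,r}. -/
def Kset (n : ℕ) (ρ r : ℝ) : Set ((Fin n → ℝ) × Matrix (Fin n) (Fin n) ℝ) :=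
  {z | z.1 ⬝ᵥ z.1 = r ^ 2 ∧
    z.2 = ρ⁻¹ • Matrix.vecMulVec z.1 z.1
        - ((z.1 ⬝ᵥ z.1) / ((n : ℝ) * ρ)) • (1 : Matrix (Fin n) (Fin n) ℝ)}

section SphereMoments

def sphereMoments (ι : Type*) [Fintype ι] (r : ℝ) : Set ((ι → ℝ) × Matrix ι ι ℝ) :=
  {z | z.1 ⬝ᵥ z.1 = r ^ 2 ∧ z.2 = vecMulVec z.1 z.1}

variable {ι : Type*}

theorem mem_segment_moments (m g : ι → ℝ) {t₁ t₂ : ℝ} (h₁ : t₁ ≤ 0) (h₂ : 0 ≤ t₂)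
    (h₁₂ : t₁ < t₂) :
    (m, vecMulVec m m - (t₁ * t₂) • vecMulVec g g) ∈
      segment ℝ (m + t₁ • g, vecMulVec (m + t₁ • g) (m + t₁ • g))
        (m + t₂ • g, vecMulVec (m + t₂ • g) (m + t₂ • g)) := by
  have hne : t₂ - t₁ ≠ 0 := (sub_pos.2 h₁₂).ne'
  refine ⟨t₂ / (t₂ - t₁), -t₁ / (t₂ - t₁), div_nonneg h₂ (sub_pos.2 h₁₂).le,
    div_nonneg (neg_nonneg.2 h₁) (sub_pos.2 h₁₂).le, by field_simp; ring, ?_⟩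
  ext i
  · simp only [Prod.fst_add, Prod.smul_fst, Pi.add_apply, Pi.smul_apply, smul_eq_mul]
    field_simp
    ring
  · simp only [Prod.snd_add, Prod.smul_snd, Matrix.add_apply, Matrix.sub_apply, Matrix.smul_apply,
      vecMulVec_apply, Pi.add_apply, Pi.smul_apply, smul_eq_mul]
    field_simp
    ring

variable [Fintype ι]

theorem convex_setOf_posSemidef_sub_vecMulVec (c : ℝ) :
    Convex ℝ {z : (ι → ℝ) × Matrix ι ι ℝ |
      (z.2 - vecMulVec z.1 z.1).PosSemidef ∧ z.2.trace = c} := by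
  rintro ⟨x, M⟩ ⟨hM, htM⟩ ⟨y, N⟩ ⟨hN, htN⟩ a b ha hb hab
  refine ⟨?_, ?_⟩
  · have key : a • M + b • N - vecMulVec (a • x + b • y) (a • x + b • y) =
        a • (M - vecMulVec x x) + b • (N - vecMulVec y y) +
          (a * b) • vecMulVec (x - y) (x - y) := by
      ext i j
      simp only [Matrix.add_apply, Matrix.sub_apply, Matrix.smul_apply, vecMulVec_apply,
        Pi.add_apply, Pi.sub_apply, Pi.smul_apply, smul_eq_mul]
      linear_combination -(a * (x i * x j) + b * (y i * y j)) * hab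
    have hxy := posSemidef_vecMulVec_self_star (x - y)
    rw [star_trivial] at hxy
    simpa only [Prod.fst_add, Prod.snd_add, Prod.smul_fst, Prod.smul_snd, key] using
      ((hM.smul ha).add (hN.smul hb)).add (hxy.smul (mul_nonneg ha hb))
  · simp only [Prod.snd_add, Prod.smul_snd, trace_add, trace_smul, htM, htN, smul_eq_mul]
    linear_combination c * hab

theorem dotProduct_self_nonneg (v : ι → ℝ) : 0 ≤ v ⬝ᵥ v :=
  Fintype.sum_nonneg fun i => mul_self_nonneg (v i)

theorem dotProduct_self_pos {v : ι → ℝ} (hv : v ≠ 0) : 0 < v ⬝ᵥ v := by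
  simpa using dotProduct_star_self_pos_iff.2 hv

theorem add_smul_mem_sphereMoments {m g : ι → ℝ} {r t : ℝ}
    (ht : (g ⬝ᵥ g) * t ^ 2 + 2 * (m ⬝ᵥ g) * t = r ^ 2 - m ⬝ᵥ m) :
    (m + t • g, vecMulVec (m + t • g) (m + t • g)) ∈ sphereMoments ι r := by
  refine ⟨?_, rfl⟩
  simp only [dotProduct_add, add_dotProduct, dotProduct_smul, smul_dotProduct, smul_eq_mul,
    dotProduct_comm g m]
  linear_combination ht

theorem mem_convexHull_sphereMoments_of_rankOne {m g : ι → ℝ} {r : ℝ} (hg : g ≠ 0)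
    (hm : m ⬝ᵥ m < r ^ 2) :
    (m, vecMulVec m m + ((r ^ 2 - m ⬝ᵥ m) / (g ⬝ᵥ g)) • vecMulVec g g) ∈
      convexHull ℝ (sphereMoments ι r) := by
  set μ := g ⬝ᵥ g
  set b := m ⬝ᵥ g
  set s := r ^ 2 - m ⬝ᵥ m
  have hμ : 0 < μ := dotProduct_self_pos hg
  have hs : 0 < s := sub_pos.2 hm
  set d := √(b ^ 2 + μ * s)
  have hd : d ^ 2 = b ^ 2 + μ * s := Real.sq_sqrt (by positivity)
  have hbd : |b| < d := by
    rw [← Real.sqrt_sq_eq_abs]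
    exact Real.sqrt_lt_sqrt (sq_nonneg b) (by nlinarith)
  obtain ⟨hb₁, hb₂⟩ := abs_lt.1 hbd
  have h₁ : (-b - d) / μ < 0 := div_neg_of_neg_of_pos (by linarith) hμ
  have h₂ : 0 < (-b + d) / μ := div_pos (by linarith) hμ
  have hroot₁ : μ * ((-b - d) / μ) ^ 2 + 2 * b * ((-b - d) / μ) = s := by
    field_simp
    linear_combination hd
  have hroot₂ : μ * ((-b + d) / μ) ^ 2 + 2 * b * ((-b + d) / μ) = s := by
    field_simp
    linear_combination hd
  have hprod : s / μ = -((-b - d) / μ * ((-b + d) / μ)) := by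
    field_simp
    linear_combination -hd
  rw [hprod, neg_smul, ← sub_eq_add_neg]
  exact segment_subset_convexHull (add_smul_mem_sphereMoments hroot₁)
    (add_smul_mem_sphereMoments hroot₂) (mem_segment_moments m g h₁.le h₂.le (h₁.trans h₂))

theorem mem_convexHull_sphereMoments {m : ι → ℝ} {M : Matrix ι ι ℝ} {r : ℝ}
    (hM : (M - vecMulVec m m).PosSemidef) (htr : M.trace = r ^ 2) :
    (m, M) ∈ convexHull ℝ (sphereMoments ι r) := by
  obtain ⟨k, g, hg⟩ := posSemidef_iff_eq_sum_vecMulVec.mp hM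
  simp only [star_trivial] at hg
  have hM' : M = vecMulVec m m + ∑ j, vecMulVec (g j) (g j) := by rw [← hg]; abel
  set s := r ^ 2 - m ⬝ᵥ m
  have hs : ∑ j, g j ⬝ᵥ g j = s := by
    simp only [s, ← htr, hM', trace_add, trace_sum, trace_vecMulVec]
    ring
  have hs_nonneg : 0 ≤ s := hs ▸ Fintype.sum_nonneg fun j => dotProduct_self_nonneg (g j)
  rcases hs_nonneg.eq_or_lt with hs₀ | hs₀
  · have hg₀ : ∀ j, g j = 0 := fun j => dotProduct_self_eq_zero.1 <| congrFun
      ((Fintype.sum_eq_zero_iff_of_nonneg fun j => dotProduct_self_nonneg (g j)).1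
        (hs.trans hs₀.symm)) j
    refine subset_convexHull ℝ _ ⟨by linarith, ?_⟩
    simp [hM', hg₀]
  · let w j := g j ⬝ᵥ g j / s
    let P j := (m, vecMulVec m m + (s / (g j ⬝ᵥ g j)) • vecMulVec (g j) (g j))
    have hw : ∑ j, w j = 1 := by rw [← Finset.sum_div, hs, div_self hs₀.ne']
    have hwP : ∀ j, w j • P j = (w j • m, w j • vecMulVec m m + vecMulVec (g j) (g j)) := by
      intro j
      rcases eq_or_ne (g j) 0 with h | h
      · simp [w, P, h, Prod.zero_eq_mk]
      · have := (dotProduct_self_pos h).ne'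
        simp only [w, P, Prod.smul_mk, smul_add, smul_smul]
        field_simp
        rw [one_smul]
    have hmem := (convex_convexHull ℝ (sphereMoments ι r)).finsum_mem (w := w) (z := P)
      (fun j => div_nonneg (dotProduct_self_nonneg _) hs₀.le)
      (by rw [finsum_eq_sum_of_fintype, hw])
      fun j hj => mem_convexHull_sphereMoments_of_rankOne
        (fun h => hj (by simp [w, h])) (sub_pos.1 hs₀)
    rw [finsum_eq_sum_of_fintype] at hmem
    convert hmem using 1
    simp only [hwP, Prod.ext_iff, Prod.fst_sum, Prod.snd_sum, Finset.sum_add_distrib,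
      ← Finset.sum_smul, hw, one_smul, hM', true_and]

theorem convexHull_sphereMoments (r : ℝ) :
    convexHull ℝ (sphereMoments ι r) =
      {z | (z.2 - vecMulVec z.1 z.1).PosSemidef ∧ z.2.trace = r ^ 2} := by
  refine subset_antisymm (convexHull_min ?_ (convex_setOf_posSemidef_sub_vecMulVec _))
    fun z hz => mem_convexHull_sphereMoments hz.1 hz.2
  rintro z ⟨hz, hz₂⟩
  exact ⟨by simpa [hz₂] using PosSemidef.zero, by rw [hz₂, trace_vecMulVec, hz]⟩

end SphereMoments

noncomputable def sphereMomentsToK (n : ℕ) (ρ r : ℝ) :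
    (Fin n → ℝ) × Matrix (Fin n) (Fin n) ℝ →ᵃ[ℝ] (Fin n → ℝ) × Matrix (Fin n) (Fin n) ℝ :=
  (LinearMap.id.prodMap (ρ⁻¹ • LinearMap.id)).toAffineMap +
    AffineMap.const ℝ _ (0, -(r ^ 2 / (n * ρ)) • 1)

theorem sphereMomentsToK_apply (n : ℕ) (ρ r : ℝ) (z : (Fin n → ℝ) × Matrix (Fin n) (Fin n) ℝ) :
    sphereMomentsToK n ρ r z = (z.1, ρ⁻¹ • z.2 - (r ^ 2 / (n * ρ)) • 1) := by
  simp [sphereMomentsToK, sub_eq_add_neg]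

theorem Kset_eq_image_sphereMoments (n : ℕ) (ρ r : ℝ) :
    Kset n ρ r = sphereMomentsToK n ρ r '' sphereMoments (Fin n) r := by
  ext ⟨x, U⟩
  simp only [Kset, sphereMoments, Set.mem_ofPred_eq, Set.mem_image, sphereMomentsToK_apply,
    Prod.exists, Prod.mk.injEq]
  constructor
  · rintro ⟨hx, rfl⟩
    exact ⟨x, _, ⟨hx, rfl⟩, rfl, by rw [hx]⟩
  · rintro ⟨x, _, ⟨hx, rfl⟩, rfl, rfl⟩
    exact ⟨hx, by rw [hx]⟩

theorem mem_convexHull_Kset_iff {n : ℕ} {ρ r : ℝ} (hn : n ≠ 0) (hρ : ρ ≠ 0)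
    {m : Fin n → ℝ} {U : Matrix (Fin n) (Fin n) ℝ} :
    (m, U) ∈ convexHull ℝ (Kset n ρ r) ↔
      (ρ • U + (r ^ 2 / n) • 1 - vecMulVec m m).PosSemidef ∧ U.trace = 0 := by
  have hn' : (n : ℝ) ≠ 0 := Nat.cast_ne_zero.2 hn
  rw [Kset_eq_image_sphereMoments, ← AffineMap.image_convexHull, convexHull_sphereMoments]
  simp only [Set.mem_image, sphereMomentsToK_apply, Prod.exists, Prod.mk.injEq]
  constructor
  · rintro ⟨x, M, ⟨hM, htr⟩, rfl, rfl⟩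
    have hM' : ρ • (ρ⁻¹ • M - (r ^ 2 / (n * ρ)) • 1) + (r ^ 2 / n) • 1 = M := by
      rw [smul_sub, smul_smul, smul_smul, mul_inv_cancel₀ hρ, one_smul]
      field_simp
      abel
    refine ⟨by rwa [hM'], ?_⟩
    simp only [trace_sub, trace_smul, htr, smul_eq_mul, trace_one, Fintype.card_fin]
    field_simp
    ring
  · rintro ⟨hM, htr⟩
    refine ⟨m, _, ⟨hM, ?_⟩, rfl, ?_⟩
    · simp only [trace_add, trace_smul, htr, smul_eq_mul, mul_zero, trace_one, Fintype.card_fin,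
        zero_add]
      field_simp
    · rw [smul_add, smul_smul, inv_mul_cancel₀ hρ, one_smul, smul_smul]
      field_simp
      abel

section lamMax

variable {n : ℕ}

theorem bddAbove_rayleigh (A : Matrix (Fin n) (Fin n) ℝ) :
    BddAbove {r : ℝ | ∃ v : Fin n → ℝ, v ⬝ᵥ v = 1 ∧ r = v ⬝ᵥ A.mulVec v} := by
  refine ⟨∑ i, ∑ j, |A i j|, ?_⟩
  rintro _ ⟨v, hv, rfl⟩
  have hv₁ : ∀ i, |v i| ≤ 1 := fun i => by
    rw [← sq_le_one_iff_abs_le_one, sq, ← hv]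
    exact Finset.single_le_sum (f := fun j => v j * v j) (fun j _ => mul_self_nonneg _)
      (Finset.mem_univ i)
  calc v ⬝ᵥ A *ᵥ v = ∑ i, ∑ j, v i * A i j * v j := by
        simp [dotProduct, mulVec, Finset.mul_sum, mul_assoc]
    _ ≤ ∑ i, ∑ j, |A i j| := Finset.sum_le_sum fun i _ => Finset.sum_le_sum fun j _ =>
        calc v i * A i j * v j ≤ |v i| * |A i j| * |v j| := by
              rw [← abs_mul, ← abs_mul]
              exact le_abs_self _
          _ ≤ |A i j| := (mul_le_of_le_one_right (by positivity) (hv₁ j)).trans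
              (mul_le_of_le_one_left (abs_nonneg _) (hv₁ i))

theorem lamMax_le_iff (hn : 0 < n) {A : Matrix (Fin n) (Fin n) ℝ} {c : ℝ} :
    lamMax A ≤ c ↔ ∀ v, v ⬝ᵥ A *ᵥ v ≤ c * (v ⬝ᵥ v) := by
  constructor
  · intro h v
    rcases eq_or_ne v 0 with rfl | hv
    · simp
    have hpos := dotProduct_self_pos hv
    set t := (√(v ⬝ᵥ v))⁻¹
    have ht : t ^ 2 * (v ⬝ᵥ v) = 1 := by
      rw [inv_pow, Real.sq_sqrt hpos.le, inv_mul_cancel₀ hpos.ne']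
    have hu : (t • v) ⬝ᵥ (t • v) = 1 := by
      rw [smul_dotProduct, dotProduct_smul, smul_eq_mul, smul_eq_mul, ← mul_assoc, ← sq, ht]
    have hle := (le_csSup (bddAbove_rayleigh A) ⟨t • v, hu, rfl⟩).trans h
    rw [mulVec_smul, smul_dotProduct, dotProduct_smul, smul_eq_mul, smul_eq_mul, ← mul_assoc,
      ← sq] at hle
    calc v ⬝ᵥ A *ᵥ v = (v ⬝ᵥ v) * (t ^ 2 * (v ⬝ᵥ A *ᵥ v)) := by
          rw [← mul_assoc, mul_comm (v ⬝ᵥ v), ht, one_mul]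
      _ ≤ c * (v ⬝ᵥ v) := (mul_le_mul_of_nonneg_left hle hpos.le).trans_eq (mul_comm _ _)
  · intro h
    refine csSup_le ⟨_, Pi.single ⟨0, hn⟩ 1, by simp, rfl⟩ ?_
    rintro _ ⟨v, hv, rfl⟩
    simpa [hv] using h v

end lamMax

theorem mem_convexHull_Kset_iff_ee_le {n : ℕ} {ρ r : ℝ} (hn : 0 < n) (hρ : 0 < ρ)
    {m : Fin n → ℝ} {U : Matrix (Fin n) (Fin n) ℝ} (hsym : U.IsSymm) (htr : U.trace = 0) :
    (m, U) ∈ convexHull ℝ (Kset n ρ r) ↔ ee n ρ m U ≤ r ^ 2 / (2 * ρ) := by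
  have hn' : (0 : ℝ) < n := Nat.cast_pos.2 hn
  set A := ρ⁻¹ • vecMulVec m m - U
  have hee : ee n ρ m U ≤ r ^ 2 / (2 * ρ) ↔ lamMax A ≤ r ^ 2 / (n * ρ) := by
    rw [ee, le_div_iff₀ (by positivity), le_div_iff₀ (by positivity)]
    constructor <;> intro h <;> linarith
  have hsymm : (ρ • U + (r ^ 2 / n) • 1 - vecMulVec m m).IsSymm :=
    ((hsym.smul ρ).add (isSymm_one.smul _)).sub (IsSymm.ext fun i j => mul_comm _ _)
  rw [mem_convexHull_Kset_iff hn.ne' hρ.ne', and_iff_left htr, hee, lamMax_le_iff hn,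
    posSemidef_iff_dotProduct_mulVec, isHermitian_iff_isSymm, and_iff_right hsymm]
  refine forall_congr' fun v => ?_
  have hquad : v ⬝ᵥ (ρ • U + (r ^ 2 / n) • 1 - vecMulVec m m) *ᵥ v =
      ρ * (r ^ 2 / (n * ρ) * (v ⬝ᵥ v) - v ⬝ᵥ A *ᵥ v) := by
    simp only [A, sub_mulVec, add_mulVec, smul_mulVec, one_mulVec, vecMulVec_mulVec,
      dotProduct_sub, dotProduct_add, dotProduct_smul, smul_eq_mul, op_smul_eq_smul]
    field_simp
    ring
  rw [star_trivial, hquad, mul_nonneg_iff_of_pos_left hρ, sub_nonneg]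

/-- r = √(2ρ·e(ρ,m,U)) is the smallest r ≥ 0 with (m,U) ∈ K_{ρ,r}^co. -/
theorem sqrt_isLeast (n : ℕ) (hn : 2 ≤ n) (ρ : ℝ) (hρ : 0 < ρ)
    (m : Fin n → ℝ) (U : Matrix (Fin n) (Fin n) ℝ)
    (hsym : U.IsSymm) (htr : U.trace = 0) :
    IsLeast {r : ℝ | 0 ≤ r ∧ (m, U) ∈ convexHull ℝ (Kset n ρ r)}
      (Real.sqrt (2 * ρ * ee n ρ m U)) := by
  have key : ∀ r, (m, U) ∈ convexHull ℝ (Kset n ρ r) ↔ 2 * ρ * ee n ρ m U ≤ r ^ 2 := fun r => by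
    rw [mem_convexHull_Kset_iff_ee_le (by omega) hρ hsym htr, le_div_iff₀ (by positivity),
      mul_comm]
  have hset : {r : ℝ | 0 ≤ r ∧ (m, U) ∈ convexHull ℝ (Kset n ρ r)} =
      Set.Ici (Real.sqrt (2 * ρ * ee n ρ m U)) := by
    ext r
    simp only [Set.mem_ofPred_eq, Set.mem_Ici, key, Real.sqrt_le_iff]
  rw [hset]
  exact isLeast_Ici
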